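/- arXiv:2209.01341 — 3 statements merged into one kernel-verified Lean document; each statement's English description precedes it below -/
import Mathlib

section
/- Let p : ∏_{i=1}^d [n_i] → ℝ and let a rooted tree on {1,…,d} be given, with a bond dimension r_w ≥ 1 assigned to each non-root node w (associated with the edge (w,P(w))) and r_{r₀} = 1 for the root. If for every non-root node w the unfolding matrix p(x_{L(w)∪{w}}; x_{R(w)}) has rank at most r_w, then there exists a family of TTNS cores {G_k}_{k=1}^d with these bond dimensions whose TTNS contraction equals p. -/
open scoped Classical

noncomputable section

/-- A rooted tree on the vertex set `Fin d`: a root and a parent map fixing the root,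
such that every vertex reaches the root under iteration of the parent map. -/
structure ParentTree (d : ℕ) where
  root : Fin d
  parent : Fin d → Fin d
  parent_root : parent root = root
  reaches_root : ∀ v : Fin d, ∃ m : ℕ, parent^[m] v = root

namespace ParentTree

variable {d : ℕ}

/-- The children of a node `k`. -/
def children (T : ParentTree d) (k : Fin d) : Set (Fin d) :=
  {w | w ≠ T.root ∧ w ≠ k ∧ T.parent w = k}

/-- The descendants of a node `w` (the "left" set `L(w)`). -/
def desc (T : ParentTree d) (w : Fin d) : Set (Fin d) :=
  {v | v ≠ w ∧ ∃ m : ℕ, 1 ≤ m ∧ T.parent^[m] v = w}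

end ParentTree

/-- The unfolding matrix `p(x_S; x_{Sᶜ})` of a `d`-dimensional tensor `p`. -/
def unfoldMatrix {d : ℕ} {n : Fin d → ℕ} (p : (∀ i, Fin (n i)) → ℝ)
    (S : Set (Fin d)) :
    Matrix ((i : S) → Fin (n i.1)) ((j : (Sᶜ : Set (Fin d))) → Fin (n j.1)) ℝ :=
  Matrix.of fun xS xSc =>
    p fun i => if h : i ∈ S then xS ⟨i, h⟩ else xSc ⟨i, h⟩

/-- The TTNS contraction of a family of cores `G k (β, x_k, α_k)`, where `β` is the
joint index over the children bonds of `k` and `α_k` is the bond of `k` itself. -/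
def ttnsContract {d : ℕ} (T : ParentTree d) (n r : Fin d → ℕ)
    (G : ∀ k : Fin d, ((w : T.children k) → Fin (r w.1)) → Fin (n k) → Fin (r k) → ℝ) :
    (∀ i, Fin (n i)) → ℝ :=
  fun x => ∑ α : (k : Fin d) → Fin (r k), ∏ k : Fin d, G k (fun w => α w.1) (x k) (α k)

/-!
Write `U_S` for the span of the columns of the unfolding of `p` along `S`. If `S ⊆ A`, a column
along `A` lies in `U_{A ∖ S} * U_S`: for fixed `x_{Sᶜ}` it is a column along `S`, and a linear
projection onto `U_S` turns it into a sum of products whose coefficients are columns along `A ∖ S`.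
Peeling off the subtrees of the children of `k` gives
`U_{subtree k} ≤ U_{{k}} * ∏_{w child of k} U_{subtree w}`. By the rank hypothesis `U_{subtree w}`
is spanned by `r w` functions `φ w` for `w ≠ root`, and we put `φ root = (p, 0, …, 0)`. Expanding
`φ k a ∈ U_{subtree k}` in this product yields cores with
`φ k a = ∑_β G k β x_k a * ∏_w φ w (β w)`; substituting this recurrence layer by layer from the
root down turns `∑_a φ root a = p` into the TTNS contraction.
-/

open Function

namespace ParentTree

variable {d : ℕ} (T : ParentTree d)

def subtree (w : Fin d) : Set (Fin d) := T.desc w ∪ {w}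

def depth (v : Fin d) : ℕ := Nat.find (T.reaches_root v)

variable {T}

theorem mem_subtree_iff {v w : Fin d} : v ∈ T.subtree w ↔ ∃ m, T.parent^[m] v = w := by
  refine ⟨?_, fun ⟨m, hm⟩ => ?_⟩
  · rintro (⟨-, m, -, hm⟩ | rfl)
    exacts [⟨m, hm⟩, ⟨0, rfl⟩]
  · by_cases hvw : v = w
    · exact Or.inr hvw
    · refine Or.inl ⟨hvw, m, Nat.pos_of_ne_zero ?_, hm⟩
      rintro rfl
      exact hvw hm

theorem self_mem_subtree (w : Fin d) : w ∈ T.subtree w := Or.inr rfl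

theorem mem_subtree_of_parent_mem {v w : Fin d} (h : T.parent v ∈ T.subtree w) :
    v ∈ T.subtree w := by
  obtain ⟨m, hm⟩ := mem_subtree_iff.1 h
  exact mem_subtree_iff.2 ⟨m + 1, hm⟩

theorem parent_mem_subtree {v w : Fin d} (h : v ∈ T.subtree w) (hne : v ≠ w) :
    T.parent v ∈ T.subtree w := by
  obtain ⟨_ | m, hm⟩ := mem_subtree_iff.1 h
  · exact absurd hm hne
  · exact mem_subtree_iff.2 ⟨m, hm⟩

theorem subtree_root : T.subtree T.root = Set.univ :=
  Set.eq_univ_of_forall fun v => mem_subtree_iff.2 (T.reaches_root v)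

theorem eq_root_of_iterate_eq {v : Fin d} {c : ℕ} (hc : c ≠ 0) (h : T.parent^[c] v = v) :
    v = T.root := by
  obtain ⟨m, hm⟩ := T.reaches_root v
  have hper : T.parent^[c * m] v = v := IsPeriodicPt.mul_const (f := T.parent) h m
  have hle : m ≤ c * m := Nat.le_mul_of_pos_left m (Nat.pos_of_ne_zero hc)
  rw [← hper, ← Nat.sub_add_cancel hle, iterate_add_apply, hm, iterate_fixed T.parent_root]

theorem mem_subtree_or_mem_subtree {v u₁ u₂ : Fin d} (h₁ : v ∈ T.subtree u₁)
    (h₂ : v ∈ T.subtree u₂) : u₁ ∈ T.subtree u₂ ∨ u₂ ∈ T.subtree u₁ := by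
  obtain ⟨a, rfl⟩ := mem_subtree_iff.1 h₁
  obtain ⟨b, rfl⟩ := mem_subtree_iff.1 h₂
  rcases le_total a b with hab | hab
  · exact Or.inl (mem_subtree_iff.2 ⟨b - a, by rw [← iterate_add_apply, Nat.sub_add_cancel hab]⟩)
  · exact Or.inr (mem_subtree_iff.2 ⟨a - b, by rw [← iterate_add_apply, Nat.sub_add_cancel hab]⟩)

theorem notMem_children_self (k : Fin d) : k ∉ T.children k := fun h => h.2.1 rfl

theorem eq_of_mem_children {k k' w : Fin d} (h : w ∈ T.children k) (h' : w ∈ T.children k') :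
    k = k' :=
  h.2.2.symm.trans h'.2.2

theorem mem_children_parent {j : Fin d} (hj : j ≠ T.root) : j ∈ T.children (T.parent j) :=
  ⟨hj, fun h => hj (eq_root_of_iterate_eq one_ne_zero h.symm), rfl⟩

theorem notMem_subtree_of_mem_children {k w : Fin d} (hw : w ∈ T.children k) :
    k ∉ T.subtree w := fun hk => by
  obtain ⟨m, hm⟩ := mem_subtree_iff.1 hk
  exact hw.1 (eq_root_of_iterate_eq m.succ_ne_zero (by rw [iterate_succ_apply, hw.2.2, hm]))

theorem subtree_subset_of_mem_children {k w : Fin d} (hw : w ∈ T.children k) :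
    T.subtree w ⊆ T.subtree k := fun v hv => by
  obtain ⟨m, hm⟩ := mem_subtree_iff.1 hv
  exact mem_subtree_iff.2 ⟨m + 1, by rw [iterate_succ_apply', hm, hw.2.2]⟩

theorem disjoint_subtree_of_mem_children {k w₁ w₂ : Fin d} (h₁ : w₁ ∈ T.children k)
    (h₂ : w₂ ∈ T.children k) (hne : w₁ ≠ w₂) : Disjoint (T.subtree w₁) (T.subtree w₂) := by
  refine Set.disjoint_left.2 fun v hv₁ hv₂ => ?_
  rcases mem_subtree_or_mem_subtree hv₁ hv₂ with h | h
  · exact notMem_subtree_of_mem_children h₂ (h₁.2.2 ▸ parent_mem_subtree h hne)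
  · exact notMem_subtree_of_mem_children h₁ (h₂.2.2 ▸ parent_mem_subtree h hne.symm)

theorem exists_mem_children_of_mem_subtree {v k : Fin d} (hv : v ∈ T.subtree k) (hne : v ≠ k) :
    ∃ w ∈ T.children k, v ∈ T.subtree w := by
  obtain ⟨m, hm⟩ := mem_subtree_iff.1 hv
  induction m generalizing v with
  | zero => exact absurd hm hne
  | succ m ih =>
    rw [iterate_succ_apply] at hm
    by_cases hp : T.parent v = k
    · refine ⟨v, ⟨fun hr => hne ?_, hne, hp⟩, self_mem_subtree v⟩
      subst hr
      rwa [T.parent_root] at hp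
    · obtain ⟨w, hw, hpw⟩ := ih (mem_subtree_iff.2 ⟨m, hm⟩) hp hm
      exact ⟨w, hw, mem_subtree_of_parent_mem hpw⟩

theorem subtree_sdiff_iUnion_children (k : Fin d) :
    T.subtree k \ ⋃ w : T.children k, T.subtree w = {k} := by
  ext v
  simp only [Set.mem_sdiff, Set.mem_iUnion, Set.mem_singleton_iff, Subtype.exists, not_exists]
  constructor
  · rintro ⟨hv, hvw⟩
    by_contra hne
    obtain ⟨w, hw, hvw'⟩ := exists_mem_children_of_mem_subtree hv hne
    exact hvw w hw hvw'
  · rintro rfl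
    exact ⟨self_mem_subtree v, fun w hw => notMem_subtree_of_mem_children hw⟩

theorem depth_eq_zero_iff {v : Fin d} : T.depth v = 0 ↔ v = T.root :=
  Nat.find_eq_zero _

theorem depth_of_mem_children {k w : Fin d} (hw : w ∈ T.children k) :
    T.depth w = T.depth k + 1 := by
  have h : ∃ m, T.parent^[m + 1] w = T.root := by
    simpa only [iterate_succ_apply, hw.2.2] using T.reaches_root k
  rw [depth, Nat.find_comp_succ _ h hw.1]
  simp only [iterate_succ_apply, hw.2.2]
  rfl

end ParentTree

open Finset

theorem Fintype.sum_sum_eq_card_smul_sum_restrict {ι : Type*} [Fintype ι] [DecidableEq ι]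
    (q : ι → Prop) [DecidablePred q] {κ : ι → Type*} [∀ i, Fintype (κ i)] {M : Type*}
    [AddCommMonoid M]
    (H : (∀ i, κ i) → (∀ i : {i // q i}, κ i) → M)
    (hH : ∀ α α' β, (∀ i, ¬ q i → α i = α' i) → H α β = H α' β) :
    ∑ α, ∑ β, H α β = Fintype.card (∀ i : {i // q i}, κ i) • ∑ α, H α (fun i => α i) := by
  let e := Equiv.piEquivPiSubtypeProd q κ
  let H' : (∀ i : {i // ¬ q i}, κ i) → (∀ i : {i // q i}, κ i) → M :=
    fun b β => H (e.symm (β, b)) β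
  have hH' : ∀ α β, H α β = H' (e α).2 β := fun α β =>
    hH _ _ _ fun i hi => by simp [e, Equiv.piEquivPiSubtypeProd, hi]
  rw [Fintype.sum_equiv e _ (fun x => ∑ β, H' x.2 β) fun α => by simp only [hH'],
    Fintype.sum_equiv e (fun α => H α (fun i => α i)) (fun x => H' x.2 x.1) fun α => hH' α _,
    Fintype.sum_prod_type, Fintype.sum_prod_type, Finset.sum_comm (f := fun a b => H' b a)]
  simp [Finset.sum_const, Finset.card_univ]

theorem Fintype.sum_comp_eval_eq_card_smul_sum {ι : Type*} [Fintype ι] [DecidableEq ι]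
    {κ : ι → Type*} [∀ i, Fintype (κ i)] {M : Type*} [AddCommMonoid M] (i : ι) (f : κ i → M) :
    ∑ α : ∀ j, κ j, f (α i) = Fintype.card (∀ j : {j // j ≠ i}, κ j) • ∑ a, f a := by
  rw [Fintype.sum_equiv (Equiv.piSplitAt i κ) (fun α => f (α i)) (fun x => f x.1) fun _ => rfl,
    Fintype.sum_prod_type]
  simp [Finset.sum_const, Finset.card_univ, Finset.smul_sum]

namespace ParentTree

variable {d : ℕ} {T : ParentTree d} {r : Fin d → ℕ}
  (g : ∀ k, ((w : T.children k) → Fin (r w.1)) → Fin (r k) → ℝ) (v : ∀ k, Fin (r k) → ℝ)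

theorem prod_filter_depth_prod_children {M : Type*} [CommMonoid M] (f : Fin d → M) (m : ℕ) :
    ∏ k ∈ univ.filter (T.depth · = m), ∏ w : T.children k, f w
      = ∏ j ∈ univ.filter (T.depth · = m + 1), f j := by
  have hroot : ∀ {j}, T.depth j = m + 1 → j ≠ T.root := fun hj hr => by
    rw [depth_eq_zero_iff.2 hr] at hj
    exact absurd hj (Nat.succ_ne_zero m).symm
  rw [← prod_fiberwise_of_maps_to (s := univ.filter (T.depth · = m + 1))
    (t := univ.filter (T.depth · = m)) (g := T.parent) ?_ f]
  · refine prod_congr rfl fun k hk => (prod_subtype _ (fun j => ?_) f).symm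
    simp only [mem_filter, mem_univ, true_and] at hk ⊢
    refine ⟨fun ⟨hj, hjk⟩ => hjk ▸ mem_children_parent (hroot hj), fun hj => ?_⟩
    exact ⟨by rw [depth_of_mem_children hj, hk], hj.2.2⟩
  · intro j hj
    simp only [mem_filter, mem_univ, true_and] at hj ⊢
    have := depth_of_mem_children (mem_children_parent (hroot hj))
    omega

theorem prod_filter_depth_lt_succ {M : Type*} [CommMonoid M] (f : Fin d → M) (m : ℕ) :
    ∏ j ∈ univ.filter (T.depth · < m + 1), f j
      = (∏ j ∈ univ.filter (T.depth · < m), f j) * ∏ j ∈ univ.filter (T.depth · = m), f j := by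
  rw [← prod_union (disjoint_filter.2 fun _ _ h h' => by omega)]
  congr 1
  ext j
  simp only [mem_filter, mem_univ, true_and, mem_union]
  omega

/-- The coordinates of `α` at depth `> m` do not occur in the summand, so every term is counted
`∏_{depth j > m} r j` times. -/
def layerSum (m : ℕ) : ℝ :=
  ∑ α : ∀ j, Fin (r j), (∏ j ∈ univ.filter (T.depth · < m), g j (fun w => α w) (α j))
    * ∏ j ∈ univ.filter (T.depth · = m), v j (α j)

variable (hrec : ∀ k a, v k a = ∑ β, g k β a * ∏ w : T.children k, v w (β w))
include hrec

theorem sum_mul_apply_eq_of_rec (k : Fin d) (F : (∀ j, Fin (r j)) → ℝ)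
    (hF : ∀ α α', (∀ j ∉ T.children k, α j = α' j) → F α = F α') :
    ∑ α, F α * v k (α k) = (∏ w : T.children k, (r w : ℝ))
      * ∑ α, F α * (g k (fun w => α w) (α k) * ∏ w : T.children k, v w (α w)) := by
  simp_rw [hrec k, mul_sum]
  rw [Fintype.sum_sum_eq_card_smul_sum_restrict (· ∈ T.children k)
    (fun α β => F α * (g k β (α k) * ∏ w : T.children k, v w (β w))), nsmul_eq_mul, Fintype.card_pi]
  · simp [mul_sum]
  · intro α α' β h
    rw [hF α α' h, h k (notMem_children_self k)]

theorem sum_mul_prod_apply_eq_of_rec (K : Finset (Fin d))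
    (hK : ∀ k ∈ K, ∀ k' ∈ K, k ∉ T.children k') (F : (∀ j, Fin (r j)) → ℝ)
    (hF : ∀ α α', (∀ j, (∀ k ∈ K, j ∉ T.children k) → α j = α' j) → F α = F α') :
    ∑ α, F α * ∏ k ∈ K, v k (α k) = (∏ k ∈ K, ∏ w : T.children k, (r w : ℝ))
      * ∑ α, F α * ∏ k ∈ K, (g k (fun w => α w) (α k) * ∏ w : T.children k, v w (α w)) := by
  induction K using Finset.induction_on generalizing F with
  | empty => simp
  | insert k K hk ih =>
    have hK' : ∀ k₁ ∈ K, ∀ k₂ ∈ K, k₁ ∉ T.children k₂ := fun k₁ h₁ k₂ h₂ =>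
      hK k₁ (mem_insert_of_mem h₁) k₂ (mem_insert_of_mem h₂)
    have hkK : ∀ k' ∈ K, k' ∉ T.children k := fun k' h => hK k' (mem_insert_of_mem h) k
      (mem_insert_self k K)
    simp only [prod_insert hk]
    calc ∑ α, F α * (v k (α k) * ∏ k' ∈ K, v k' (α k'))
        = ∑ α, (F α * ∏ k' ∈ K, v k' (α k')) * v k (α k) :=
          sum_congr rfl fun α _ => by ring
      _ = (∏ w : T.children k, (r w : ℝ)) * ∑ α, (F α * ∏ k' ∈ K, v k' (α k'))
          * (g k (fun w => α w) (α k) * ∏ w : T.children k, v w (α w)) := by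
        refine sum_mul_apply_eq_of_rec g v hrec k (fun α => F α * ∏ k' ∈ K, v k' (α k'))
          fun α α' h => ?_
        rw [hF α α' fun j hj => h j (hj k (mem_insert_self k K))]
        exact congrArg _ (prod_congr rfl fun k' hk' => by rw [h k' (hkK k' hk')])
      _ = (∏ w : T.children k, (r w : ℝ)) * ∑ α, (F α
          * (g k (fun w => α w) (α k) * ∏ w : T.children k, v w (α w))) * ∏ k' ∈ K, v k' (α k') :=
        congrArg _ (sum_congr rfl fun α _ => by ring)
      _ = _ := by
        rw [ih hK' _ fun α α' h => ?_, ← mul_assoc]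
        · simp only [mul_assoc]
        have hw : ∀ w : T.children k, α w = α' w := fun w =>
          h w fun k' hk' hw' => hk (eq_of_mem_children w.2 hw' ▸ hk')
        have hkk : α k = α' k :=
          h k fun k' hk' => hK k (mem_insert_self k K) k' (mem_insert_of_mem hk')
        rw [hF α α' fun j hj => h j fun k' hk' => hj k' (mem_insert_of_mem hk'), hkk]
        simp only [hw]

theorem layerSum_eq_mul_layerSum_succ (m : ℕ) :
    layerSum g v m = (∏ j ∈ univ.filter (T.depth · = m + 1), (r j : ℝ)) * layerSum g v (m + 1) := by
  rw [layerSum, sum_mul_prod_apply_eq_of_rec g v hrec _ ?_ _ ?_,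
    prod_filter_depth_prod_children (fun j => (r j : ℝ))]
  · refine congrArg _ (sum_congr rfl fun α _ => ?_)
    rw [prod_mul_distrib, prod_filter_depth_prod_children (fun j => v j (α j)), ← mul_assoc,
      ← prod_filter_depth_lt_succ]
  · intro k hk k' hk' hkk'
    simp only [mem_filter, mem_univ, true_and] at hk hk'
    have := depth_of_mem_children hkk'
    omega
  · intro α α' h
    refine prod_congr rfl fun j hj => ?_
    simp only [mem_filter, mem_univ, true_and] at hj
    have hagree : ∀ i, T.depth i ≤ m → α i = α' i := fun i hi => h i fun k hk hik => by
      simp only [mem_filter, mem_univ, true_and] at hk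
      have := depth_of_mem_children hik
      omega
    have hw : ∀ w : T.children j, α w = α' w := fun w => hagree w (by
      have := depth_of_mem_children w.2
      omega)
    rw [hagree j hj.le]
    simp only [hw]

theorem sum_prod_eq_sum_root (hr : ∀ j, 1 ≤ r j) :
    ∑ α : ∀ j, Fin (r j), ∏ k, g k (fun w => α w) (α k) = ∑ a, v T.root a := by
  have hinv : ∀ m, (∏ j ∈ univ.filter (T.depth · < m + 1), (r j : ℝ)) * layerSum g v m
      = r T.root * layerSum g v 0 := by
    intro m
    induction m with
    | zero => simp [depth_eq_zero_iff, filter_eq']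
    | succ m ih =>
      rw [← ih, layerSum_eq_mul_layerSum_succ g v hrec m, prod_filter_depth_lt_succ _ (m + 1)]
      ring
  have hM : ∀ j, T.depth j < univ.sup T.depth + 1 := fun j =>
    Nat.lt_succ_of_le (le_sup (mem_univ j))
  have hlast : layerSum g v (univ.sup T.depth + 1)
      = ∑ α : ∀ j, Fin (r j), ∏ k, g k (fun w => α w) (α k) := by
    rw [layerSum, filter_true_of_mem fun j _ => hM j, filter_false_of_mem fun j _ => (hM j).ne]
    simp
  have hfirst : layerSum g v 0 = (∏ j : {j // j ≠ T.root}, (r j : ℝ)) * ∑ a, v T.root a := by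
    simp [layerSum, depth_eq_zero_iff, filter_eq', Fintype.sum_comp_eval_eq_card_smul_sum,
      Fintype.card_pi]
  have hpos : (0 : ℝ) < ∏ j, (r j : ℝ) := prod_pos fun j _ => by exact_mod_cast hr j
  have h := hinv (univ.sup T.depth + 1)
  rw [filter_true_of_mem fun j _ => (hM j).trans (Nat.lt_succ_self _), hlast, hfirst, ← mul_assoc,
    ← Fintype.prod_eq_mul_prod_subtype_ne (fun j => (r j : ℝ))] at h
  exact mul_left_cancel₀ hpos.ne' h

end ParentTree

theorem Submodule.diag_mem_mul {X 𝕜 : Type*} [Fintype X] [DecidableEq X] [Field 𝕜]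
    {V W : Submodule 𝕜 (X → 𝕜)} (M : X → X → 𝕜) (hV : ∀ x, (fun u => M u x) ∈ V)
    (hW : ∀ u, M u ∈ W) : (fun x => M x x) ∈ W * V := by
  obtain ⟨π, hπ⟩ := LinearMap.exists_extend (LinearMap.id : V →ₗ[𝕜] V)
  have hπV : ∀ f ∈ V, (π f : X → 𝕜) = f := fun f hf =>
    congrArg Subtype.val (LinearMap.congr_fun hπ ⟨f, hf⟩)
  have hdiag : (fun x => M x x) = ∑ u, M u * (π (Pi.single u 1) : X → 𝕜) := by
    funext x
    rw [← congrFun (hπV _ (hV x)) x]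
    conv_lhs => rw [pi_eq_sum_univ' (fun u => M u x)]
    simp [Finset.sum_apply]
  rw [hdiag]
  exact Submodule.sum_mem _ fun u _ => Submodule.mul_mem_mul (hW u) (π _).2

theorem Submodule.exists_fin_span_range_eq {K V : Type*} [DivisionRing K] [AddCommGroup V]
    [Module K V] (U : Submodule K V) [FiniteDimensional K U] {m : ℕ}
    (h : Module.finrank K U ≤ m) : ∃ ψ : Fin m → V, Submodule.span K (Set.range ψ) = U := by
  let b := Module.finBasis K U
  let ψ : Fin m → V := fun i => if hi : (i : ℕ) < Module.finrank K U then b ⟨i, hi⟩ else 0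
  refine ⟨ψ, le_antisymm (Submodule.span_le.2 ?_) fun v hv => ?_⟩
  · rintro _ ⟨i, rfl⟩
    by_cases hi : (i : ℕ) < Module.finrank K U
    all_goals simp [ψ, hi]
  · have hsum : v = ((∑ i, b.repr ⟨v, hv⟩ i • b i : U) : V) := by rw [b.sum_repr]
    rw [hsum, Submodule.coe_sum]
    refine Submodule.sum_mem _ fun i _ =>
      Submodule.smul_mem _ _ (Submodule.subset_span ⟨i.castLE h, ?_⟩)
    simp [ψ]

section Unfolding

variable {d : ℕ} {n : Fin d → ℕ}

/-- Column `y` of `unfoldMatrix p S`, as a function of all the variables (constant in `x_{Sᶜ}`), so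
that the column spaces for different `S` live in one algebra and can be multiplied. -/
def unfoldCol (p : (∀ i, Fin (n i)) → ℝ) (S : Set (Fin d)) (y : ∀ i, Fin (n i)) :
    (∀ i, Fin (n i)) → ℝ :=
  fun x => p (S.piecewise x y)

def unfoldColSpan (p : (∀ i, Fin (n i)) → ℝ) (S : Set (Fin d)) :
    Submodule ℝ ((∀ i, Fin (n i)) → ℝ) :=
  Submodule.span ℝ (Set.range (unfoldCol p S))

variable (p : (∀ i, Fin (n i)) → ℝ)

theorem finrank_unfoldColSpan_le (S : Set (Fin d)) [DecidablePred (· ∈ S)] :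
    Module.finrank ℝ (unfoldColSpan p S) ≤ (unfoldMatrix p S).rank := by
  let extend := LinearMap.funLeft ℝ ℝ fun (x : ∀ i, Fin (n i)) (i : S) => x i
  have hle : unfoldColSpan p S
      ≤ (Submodule.span ℝ (Set.range (unfoldMatrix p S).transpose)).map extend := by
    rw [Submodule.map_span, unfoldColSpan]
    refine Submodule.span_mono ?_
    rintro _ ⟨y, rfl⟩
    refine ⟨_, ⟨fun j => y j, rfl⟩, funext fun x => ?_⟩
    simp only [extend, unfoldCol, unfoldMatrix, LinearMap.funLeft_apply, Matrix.transpose_apply,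
      Matrix.of_apply, dite_eq_ite]
    congr 1
    funext i
    by_cases hi : i ∈ S <;> simp [Set.piecewise, hi]
  rw [Matrix.rank_eq_finrank_span_cols]
  exact (Submodule.finrank_mono hle).trans (Submodule.finrank_map_le _ _)

theorem mem_unfoldColSpan_univ : p ∈ unfoldColSpan p Set.univ := by
  rcases isEmpty_or_nonempty (∀ i, Fin (n i)) with hX | hX
  · rw [Subsingleton.elim p 0]
    exact Submodule.zero_mem _
  · obtain ⟨y⟩ := hX
    exact Submodule.subset_span ⟨y, funext fun x => by simp [unfoldCol]⟩

theorem unfoldColSpan_singleton_le (k : Fin d) :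
    unfoldColSpan p {k} ≤ Submodule.span ℝ (Set.range fun c : Fin (n k) =>
      fun x : ∀ i, Fin (n i) => if x k = c then (1 : ℝ) else 0) := by
  rw [unfoldColSpan, Submodule.span_le]
  rintro _ ⟨y, rfl⟩
  have : unfoldCol p {k} y = ∑ c, p (Function.update y k c) • fun x : ∀ i, Fin (n i) =>
      if x k = c then (1 : ℝ) else 0 := by
    funext x
    simp only [unfoldCol, Finset.sum_apply, Pi.smul_apply, smul_eq_mul, mul_ite, mul_one,
      mul_zero, Finset.sum_ite_eq, Finset.mem_univ, if_true]
    congr 1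
    funext i
    by_cases hi : i = k
    · subst hi
      simp [Set.piecewise]
    · simp [Set.piecewise, hi]
  rw [this]
  exact Submodule.sum_mem _ fun c _ => Submodule.smul_mem _ _ (Submodule.subset_span ⟨c, rfl⟩)

theorem unfoldColSpan_le_mul {S A : Set (Fin d)} (hSA : S ⊆ A) :
    unfoldColSpan p A ≤ unfoldColSpan p (A \ S) * unfoldColSpan p S := by
  rw [unfoldColSpan, Submodule.span_le]
  rintro _ ⟨z, rfl⟩
  have hdiag : ∀ x, S.piecewise x (A.piecewise x z) = A.piecewise x z := fun x => by
    funext i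
    by_cases hS : i ∈ S
    · simp [Set.piecewise, hS, hSA hS]
    · simp [Set.piecewise, hS]
  have hswap : ∀ u x, S.piecewise u (A.piecewise x z) = (A \ S).piecewise x (S.piecewise u z) :=
    fun u x => by
      funext i
      by_cases hS : i ∈ S
      · simp [Set.piecewise, hS]
      · by_cases hA : i ∈ A <;> simp [Set.piecewise, hS, hA]
  have hmem := Submodule.diag_mem_mul (V := unfoldColSpan p S) (W := unfoldColSpan p (A \ S))
    (fun u x => p (S.piecewise u (A.piecewise x z)))
    (fun x => Submodule.subset_span ⟨A.piecewise x z, rfl⟩)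
    (fun u => Submodule.subset_span ⟨S.piecewise u z, funext fun x => by
      simp only [unfoldCol, hswap]
      congr⟩)
  show (fun x => p (A.piecewise x z)) ∈ unfoldColSpan p (A \ S) * unfoldColSpan p S
  simpa only [hdiag] using hmem

theorem unfoldColSpan_le_mul_prod {ι : Type*} (s : Finset ι) {A : Set (Fin d)}
    (S : ι → Set (Fin d)) (hSA : ∀ j ∈ s, S j ⊆ A) (hS : (s : Set ι).PairwiseDisjoint S) :
    unfoldColSpan p A ≤ unfoldColSpan p (A \ ⋃ j ∈ s, S j) * ∏ j ∈ s, unfoldColSpan p (S j) := by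
  classical
  induction s using Finset.induction_on with
  | empty => simp
  | insert j s hj ih =>
    have hjA : S j ⊆ A \ ⋃ i ∈ s, S i := fun a ha => by
      refine ⟨hSA j (Finset.mem_insert_self j s) ha, ?_⟩
      simp only [Set.mem_iUnion, not_exists]
      intro i hi hai
      exact Set.disjoint_left.1 (hS (by simp) (by simp [hi]) fun h : j = i => hj (h ▸ hi)) ha hai
    calc unfoldColSpan p A
        ≤ unfoldColSpan p (A \ ⋃ i ∈ s, S i) * ∏ i ∈ s, unfoldColSpan p (S i) :=
          ih (fun i hi => hSA i (Finset.mem_insert_of_mem hi)) (hS.subset (by simp))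
      _ ≤ unfoldColSpan p ((A \ ⋃ i ∈ s, S i) \ S j) * unfoldColSpan p (S j)
            * ∏ i ∈ s, unfoldColSpan p (S i) :=
          mul_le_mul' (unfoldColSpan_le_mul p hjA) le_rfl
      _ = _ := by
          rw [Finset.prod_insert hj, Set.sdiff_sdiff, Finset.set_biUnion_insert, Set.union_comm,
            mul_assoc]

end Unfolding

theorem ParentTree.unfoldColSpan_subtree_le {d : ℕ} {n : Fin d → ℕ} (p : (∀ i, Fin (n i)) → ℝ)
    (T : ParentTree d) (k : Fin d) :
    unfoldColSpan p (T.subtree k)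
      ≤ unfoldColSpan p {k} * ∏ w : T.children k, unfoldColSpan p (T.subtree w) := by
  have hk : T.subtree k \ ⋃ w ∈ (Finset.univ : Finset (T.children k)), T.subtree w = {k} := by
    simpa using T.subtree_sdiff_iUnion_children k
  simpa only [hk] using unfoldColSpan_le_mul_prod p Finset.univ
    (fun w : T.children k => T.subtree w) (fun w _ => subtree_subset_of_mem_children w.2)
    fun w₁ _ w₂ _ hne => disjoint_subtree_of_mem_children w₁.2 w₂.2 (Subtype.coe_ne_coe.2 hne)

open scoped Pointwise in
theorem ParentTree.exists_core_of_mem_unfoldColSpan {d : ℕ} {n : Fin d → ℕ}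
    (p : (∀ i, Fin (n i)) → ℝ) {T : ParentTree d} {r : Fin d → ℕ}
    (φ : ∀ k, Fin (r k) → (∀ i, Fin (n i)) → ℝ) {k : Fin d}
    (hφ : ∀ w ∈ T.children k,
      unfoldColSpan p (T.subtree w) ≤ Submodule.span ℝ (Set.range (φ w)))
    {f : (∀ i, Fin (n i)) → ℝ} (hf : f ∈ unfoldColSpan p (T.subtree k)) :
    ∃ c : ((w : T.children k) → Fin (r w)) → Fin (n k) → ℝ,
      ∀ x, f x = ∑ β, c β (x k) * ∏ w : T.children k, φ w (β w) x := by
  let ind : Fin (n k) → (∀ i, Fin (n i)) → ℝ := fun c x => if x k = c then 1 else 0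
  have hle := (T.unfoldColSpan_subtree_le p k).trans
    (mul_le_mul' (unfoldColSpan_singleton_le p k) (Finset.prod_le_prod' fun w _ => hφ w w.2))
  rw [Submodule.prod_span, Submodule.span_mul_span] at hle
  have hspan : Submodule.span ℝ (Set.range ind * ∏ w : T.children k, Set.range (φ w))
      ≤ Submodule.span ℝ (Set.range fun q : ((w : T.children k) → Fin (r w)) × Fin (n k) =>
          ind q.2 * ∏ w : T.children k, φ w (q.1 w)) := by
    refine Submodule.span_mono ?_
    rintro _ ⟨_, ⟨c, rfl⟩, g, hg, rfl⟩
    obtain ⟨g', hg', rfl⟩ := (Set.mem_fintype_prod _ _).1 hg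
    choose β hβ using hg'
    exact ⟨(β, c), by simp [hβ]⟩
  obtain ⟨coef, hcoef⟩ := (Submodule.mem_span_range_iff_exists_fun ℝ).1 (hspan (hle hf))
  refine ⟨fun β c => coef (β, c), fun x => ?_⟩
  rw [← hcoef]
  simp [Finset.sum_apply, Fintype.sum_prod_type, ind, Finset.prod_apply]

theorem ttns_existence_general {d : ℕ} (T : ParentTree d) (n r : Fin d → ℕ)
    (hr : ∀ w, 1 ≤ r w)
    (p : (∀ i, Fin (n i)) → ℝ)
    (hrank : ∀ w : Fin d, w ≠ T.root →
      (unfoldMatrix p (T.desc w ∪ {w})).rank ≤ r w) :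
    ∃ G : ∀ k : Fin d, ((w : T.children k) → Fin (r w.1)) → Fin (n k) → Fin (r k) → ℝ,
      ttnsContract T n r G = p := by
  have hφ : ∀ k, ∃ φk : Fin (r k) → (∀ i, Fin (n i)) → ℝ,
      (∀ a, φk a ∈ unfoldColSpan p (T.subtree k)) ∧
      (k ≠ T.root → unfoldColSpan p (T.subtree k) ≤ Submodule.span ℝ (Set.range φk)) ∧
      (k = T.root → ∑ a, φk a = p) := by
    intro k
    by_cases hk : k = T.root
    · subst hk
      refine ⟨Pi.single ⟨0, hr _⟩ p, fun a => ?_, fun h => absurd rfl h, fun _ => by simp⟩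
      rw [Pi.single_apply, T.subtree_root]
      split_ifs
      exacts [mem_unfoldColSpan_univ p, Submodule.zero_mem _]
    · obtain ⟨φk, hφk⟩ := Submodule.exists_fin_span_range_eq _
        ((finrank_unfoldColSpan_le p (T.desc k ∪ {k})).trans (hrank k hk))
      exact ⟨φk, fun a => hφk ▸ Submodule.subset_span ⟨a, rfl⟩, fun _ => hφk.ge,
        fun h => absurd h hk⟩
  choose φ hφmem hφspan hφroot using hφ
  choose G hG using fun k a =>
    T.exists_core_of_mem_unfoldColSpan p φ (fun w hw => hφspan w hw.1) (hφmem k a)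
  refine ⟨fun k β c a => G k a β c, funext fun x => ?_⟩
  rw [ttnsContract, ParentTree.sum_prod_eq_sum_root _ (fun k a => φ k a x) (fun k a => hG k a x) hr,
    ← Finset.sum_apply, hφroot _ rfl]

/-- if every unfolding `p(x_{L(w)∪{w}}; x_{R(w)})` at a non-root node `w`
has rank at most `r w`, then `p` admits a TTNS representation with these bond
dimensions. -/
theorem ttns_existence {d : ℕ} (T : ParentTree d) (n r : Fin d → ℕ)
    (hn : ∀ k, 1 ≤ n k) (hr : ∀ w, 1 ≤ r w) (hroot : r T.root = 1)
    (p : (∀ i, Fin (n i)) → ℝ)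
    (hrank : ∀ w : Fin d, w ≠ T.root →
      (unfoldMatrix p (T.desc w ∪ {w})).rank ≤ r w) :
    ∃ G : ∀ k : Fin d, ((w : T.children k) → Fin (r w.1)) → Fin (n k) → Fin (r k) → ℝ,
      ttnsContract T n r G = p :=
  ttns_existence_general T n r hr p hrank
end
end

section
/- Let a rooted tree on {1,…,d} with bond dimensions r_w (r_{r₀} = 1) be given, let p be the TTNS contraction of TTNS cores {G_k}_{k=1}^d, and let p' be the TTNS contraction of the perturbed cores {G_k + ΔG_k}_{k=1}^d (with the same tree, physical dimensions and bond dimensions). Viewing each core as a 3-tensor with middle index x_k (as in the TTNS 3-tensor convention) and writing ⦀·⦀ for the maximum over the middle index of the spectral norm of the matrix slice, suppose ⦀ΔG_k⦀ ≤ δ_k · ⦀G_k⦀ for all k, where δ_k ≥ 0. Then ‖p' − p‖_∞ ≤ (∏_{k=1}^d ⦀G_k⦀) · (Σ_{k=1}^d δ_k) · exp(Σ_{k=1}^d δ_k). Moreover, if ε ∈ (0,1) and max_k δ_k ≤ ε/(3d), then ‖p' − p‖_∞ / ∏_{k=1}^d ⦀G_k⦀ ≤ ε. -/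
open scoped Classical

noncomputable section

/-- The spectral norm (`ℓ² → ℓ²` operator norm) of a real matrix. -/
def specNorm {m n : Type*} [Fintype m] [Fintype n] [DecidableEq n]
    (M : Matrix m n ℝ) : ℝ :=
  ‖LinearMap.toContinuousLinearMap (Matrix.toEuclideanLin M)‖

/-- The `⦀·⦀` norm of a 3-tensor: the maximum over the middle index of the spectral
norm of the corresponding matrix slice. -/
def tnorm {r₁ X r₂ : Type*} [Fintype r₁] [Fintype X] [Fintype r₂] [DecidableEq r₂]
    (G : r₁ → X → r₂ → ℝ) : ℝ :=
  ⨆ x : X, specNorm (Matrix.of fun α β => G α x β)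


/-!
By telescoping, `p' - p` is the sum over `i` of the contractions whose cores are `G_k + ΔG_k` for
`k < i`, `ΔG_i` at `i` and `G_k` for `k > i`. A contraction is bounded by the product of the
spectral norms of the slices of its cores: contracting from the leaves up, each node applies the
transposed slice of its core to the tensor product of the partial contractions of its children,
and the Euclidean norm of a tensor product is the product of the norms. The `i`-th term is thus
at most `δ_i ∏_k (1 + δ_k) ⦀G_k⦀`, and `∏_k (1 + δ_k) ≤ exp (∑_k δ_k)`.
-/

namespace ParentTree

variable {d : ℕ} (T : ParentTree d)

lemma iterate_parent_root (m : ℕ) : T.parent^[m] T.root = T.root :=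
  Function.iterate_fixed T.parent_root m

lemma eq_root_of_iterate_parent_eq_self {v : Fin d} {m : ℕ} (hm : 0 < m)
    (h : T.parent^[m] v = v) : v = T.root := by
  obtain ⟨m₀, hm₀⟩ := T.reaches_root v
  calc v = T.parent^[m * m₀] v := (Function.IsPeriodicPt.mul_const h m₀).eq.symm
    _ = T.parent^[m * m₀ - m₀] (T.parent^[m₀] v) := by
        rw [← Function.iterate_add_apply, Nat.sub_add_cancel (Nat.le_mul_of_pos_left m₀ hm)]
    _ = T.root := by rw [hm₀, T.iterate_parent_root]

lemma not_mem_desc_self (k : Fin d) : k ∉ T.desc k := fun h => h.1 rfl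

lemma mem_desc_root {v : Fin d} (hv : v ≠ T.root) : v ∈ T.desc T.root := by
  obtain ⟨m, hm⟩ := T.reaches_root v
  refine ⟨hv, m, Nat.one_le_iff_ne_zero.2 ?_, hm⟩
  rintro rfl
  exact hv hm

lemma mem_desc_of_mem_children {k w : Fin d} (hw : w ∈ T.children k) : w ∈ T.desc k :=
  ⟨hw.2.1, 1, le_rfl, hw.2.2⟩

lemma desc_trans {k j v : Fin d} (hj : j ∈ T.desc k) (hv : v ∈ T.desc j) : v ∈ T.desc k := by
  obtain ⟨hvj, m, hm, hmv⟩ := hv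
  obtain ⟨hjk, m', hm', hmj⟩ := hj
  have hit : T.parent^[m' + m] v = k := by rw [Function.iterate_add_apply, hmv, hmj]
  refine ⟨?_, m' + m, by omega, hit⟩
  rintro rfl
  have hv : v = T.root := T.eq_root_of_iterate_parent_eq_self (by omega) hit
  rw [hv, T.iterate_parent_root] at hmv
  exact hjk (hmv.symm.trans hv.symm)

lemma eq_of_iterate_parent_eq {k w w' : Fin d} (hw : w ∈ T.children k)
    (hw' : w' ∈ T.children k) {u : ℕ} (h : T.parent^[u] w = w') : w = w' := by
  cases u with
  | zero => exact h
  | succ u =>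
    rw [Function.iterate_succ_apply, hw.2.2] at h
    have hk : k = T.root := T.eq_root_of_iterate_parent_eq_self u.succ_pos <| by
      rw [Function.iterate_succ_apply', h, hw'.2.2]
    exact absurd (by rw [← h, hk, T.iterate_parent_root]) hw'.1

lemma not_mem_desc_of_mem_children {k w w' : Fin d} (hw : w ∈ T.children k)
    (hw' : w' ∈ T.children k) (h : w' ∈ T.desc w) : False := by
  obtain ⟨hne, m, -, hm⟩ := h
  exact hne (T.eq_of_iterate_parent_eq hw' hw hm)

lemma eq_of_mem_desc_of_mem_desc {k w w' j : Fin d} (hw : w ∈ T.children k)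
    (hw' : w' ∈ T.children k) (hj : j ∈ T.desc w) (hj' : j ∈ T.desc w') : w = w' := by
  obtain ⟨-, s, -, hs⟩ := hj
  obtain ⟨-, t, -, ht⟩ := hj'
  rcases le_total s t with hst | hst
  · refine T.eq_of_iterate_parent_eq hw hw' (u := t - s) ?_
    rwa [← hs, ← Function.iterate_add_apply, Nat.sub_add_cancel hst]
  · refine (T.eq_of_iterate_parent_eq hw' hw (u := s - t) ?_).symm
    rwa [← ht, ← Function.iterate_add_apply, Nat.sub_add_cancel hst]

-- The last step of a shortest path from `j` up to `k` is a child of `k`.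
lemma mem_children_or_mem_desc_children {k j : Fin d} (hj : j ∈ T.desc k) :
    j ∈ T.children k ∨ ∃ w ∈ T.children k, j ∈ T.desc w := by
  obtain ⟨hjk, m, -, hm⟩ := hj
  have hex : ∃ u, T.parent^[u] j = k := ⟨m, hm⟩
  have hpos : 0 < Nat.find hex :=
    Nat.pos_of_ne_zero fun h0 => hjk (by simpa [h0] using Nat.find_spec hex)
  set w := T.parent^[Nat.find hex - 1] j with hw_def
  have hwk : T.parent w = k := by
    rw [hw_def, ← Function.iterate_succ_apply' T.parent, Nat.succ_eq_add_one,
      Nat.sub_one_add_one hpos.ne']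
    exact Nat.find_spec hex
  have hw_ne : w ≠ k := Nat.find_min hex (Nat.sub_lt hpos one_pos)
  have hw : w ∈ T.children k :=
    ⟨fun hroot => hw_ne (by rw [← hwk, hroot, T.parent_root]), hw_ne, hwk⟩
  by_cases hjw : j = w
  · exact .inl (hjw ▸ hw)
  · exact .inr ⟨w, hw, hjw, Nat.find hex - 1, by
      by_contra h0
      exact hjw (by simp [hw_def, show Nat.find hex - 1 = 0 by omega]), rfl⟩

def descEquiv (k : Fin d) :
    (T.children k ⊕ Σ w : T.children k, T.desc w) ≃ T.desc k :=
  Equiv.ofBijective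
    (Sum.elim (fun w => ⟨w, T.mem_desc_of_mem_children w.2⟩)
      fun p => ⟨p.2, T.desc_trans (T.mem_desc_of_mem_children p.1.2) p.2.2⟩) <| by
    refine ⟨?_, fun j => ?_⟩
    · rintro (w | ⟨w, j⟩) (w' | ⟨w', j'⟩) h <;> simp only [Sum.elim_inl, Sum.elim_inr,
        Subtype.mk.injEq] at h
      · exact congrArg Sum.inl (Subtype.ext h)
      · exact (T.not_mem_desc_of_mem_children w'.2 w.2 (h ▸ j'.2)).elim
      · exact (T.not_mem_desc_of_mem_children w.2 w'.2 (h ▸ j.2)).elim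
      · obtain rfl : w = w' :=
          Subtype.ext (T.eq_of_mem_desc_of_mem_desc w.2 w'.2 j.2 (by rw [h]; exact j'.2))
        obtain rfl : j = j' := Subtype.ext h
        rfl
    · rcases T.mem_children_or_mem_desc_children j.2 with hj | ⟨w, hw, hj⟩
      · exact ⟨.inl ⟨j, hj⟩, rfl⟩
      · exact ⟨.inr ⟨⟨w, hw⟩, ⟨j, hj⟩⟩, rfl⟩

def rootEquiv : Option (T.desc T.root) ≃ Fin d :=
  Equiv.ofBijective (Option.elim · T.root Subtype.val) <| by
    refine ⟨?_, fun v => ?_⟩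
    · rintro (_ | j) (_ | j') h <;> simp only [Option.elim_none, Option.elim_some] at h
      · rfl
      · exact (T.not_mem_desc_self T.root (by simpa [h] using j'.2)).elim
      · exact (T.not_mem_desc_self T.root (by simpa [h] using j.2)).elim
      · exact congrArg some (Subtype.ext h)
    · by_cases hv : v = T.root
      · exact ⟨none, hv.symm⟩
      · exact ⟨some ⟨v, T.mem_desc_root hv⟩, rfl⟩

lemma prod_desc {M : Type*} [CommMonoid M] (k : Fin d) (f : T.desc k → M) :
    ∏ j, f j = ∏ w : T.children k, (f ⟨w, T.mem_desc_of_mem_children w.2⟩ *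
      ∏ j : T.desc w, f ⟨j, T.desc_trans (T.mem_desc_of_mem_children w.2) j.2⟩) := by
  rw [← (T.descEquiv k).prod_comp, Fintype.prod_sum_type, ← Finset.univ_sigma_univ,
    Finset.prod_sigma, ← Finset.prod_mul_distrib]
  rfl

lemma prod_univ_eq_mul_prod_desc_root {M : Type*} [CommMonoid M] (f : Fin d → M) :
    ∏ k, f k = f T.root * ∏ j : T.desc T.root, f j := by
  rw [← T.rootEquiv.prod_comp, Fintype.prod_option]
  rfl

variable (r : Fin d → ℕ)

def descPiEquiv (k : Fin d) :
    ((j : T.desc k) → Fin (r j)) ≃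
      ((w : T.children k) → Fin (r w)) × ((w : T.children k) → (j : T.desc w) → Fin (r j)) :=
  (Equiv.piCongrLeft' _ (T.descEquiv k).symm).trans
    ((Equiv.sumPiEquivProdPi _).trans (Equiv.prodCongr (Equiv.refl _)
      (Equiv.piCurry fun (w : T.children k) (j : T.desc w) => Fin (r j))))

def rootPiEquiv :
    ((k : Fin d) → Fin (r k)) ≃ Fin (r T.root) × ((j : T.desc T.root) → Fin (r j)) :=
  (Equiv.piCongrLeft' _ T.rootEquiv.symm).trans (Equiv.piOptionEquivProd)

end ParentTree

section SubtreeContraction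

variable {d : ℕ} (T : ParentTree d) {n r : Fin d → ℕ}
  (H : ∀ k : Fin d, ((w : T.children k) → Fin (r w)) → Fin (n k) → Fin (r k) → ℝ)
  (x : ∀ i, Fin (n i))

def subtreeWeight (k : Fin d) (α : (j : T.desc k) → Fin (r j)) (a : Fin (r k)) : ℝ :=
  (∏ j : T.desc k,
      H j (fun w => α ⟨w, T.desc_trans j.2 (T.mem_desc_of_mem_children w.2)⟩) (x j) (α j)) *
    H k (fun w => α ⟨w, T.mem_desc_of_mem_children w.2⟩) (x k) a

-- The contraction of the subtree rooted at `k`, with the bond `a` of `k` left open.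
def subtreeContract (k : Fin d) (a : Fin (r k)) : ℝ :=
  ∑ α, subtreeWeight T H x k α a

lemma subtreeWeight_eq (k : Fin d) (α : (j : T.desc k) → Fin (r j)) (a : Fin (r k)) :
    subtreeWeight T H x k α a =
      H k (T.descPiEquiv r k α).1 (x k) a * ∏ w : T.children k,
        subtreeWeight T H x w ((T.descPiEquiv r k α).2 w) ((T.descPiEquiv r k α).1 w) := by
  rw [subtreeWeight, T.prod_desc, mul_comm]
  exact congrArg _ (Finset.prod_congr rfl fun w _ => mul_comm _ _)

lemma subtreeContract_eq (k : Fin d) (a : Fin (r k)) :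
    subtreeContract T H x k a =
      ∑ β, H k β (x k) a * ∏ w : T.children k, subtreeContract T H x w (β w) := by
  simp only [subtreeContract, subtreeWeight_eq T H x k _ a]
  rw [(T.descPiEquiv r k).sum_comp
    (fun p => H k p.1 (x k) a * ∏ w : T.children k, subtreeWeight T H x w (p.2 w) (p.1 w)),
    Fintype.sum_prod_type]
  simp only [← Finset.mul_sum, Fintype.prod_sum]

lemma ttnsContract_eq_sum_subtreeContract_root :
    ttnsContract T n r H x = ∑ a, subtreeContract T H x T.root a := by
  simp only [ttnsContract, subtreeContract]
  rw [← Fintype.sum_prod_type']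
  refine Fintype.sum_equiv (T.rootPiEquiv r) _ _ fun α => ?_
  rw [T.prod_univ_eq_mul_prod_desc_root, subtreeWeight, mul_comm]
  rfl

end SubtreeContraction

section SpectralNorm

open scoped Matrix Matrix.Norms.L2Operator

variable {m n : Type*} [Fintype m] [Fintype n] [DecidableEq n]

lemma specNorm_nonneg (M : Matrix m n ℝ) : 0 ≤ specNorm M := norm_nonneg M

lemma specNorm_add_le (A B : Matrix m n ℝ) : specNorm (A + B) ≤ specNorm A + specNorm B :=
  norm_add_le A B

lemma specNorm_transpose [DecidableEq m] (M : Matrix m n ℝ) : specNorm Mᵀ = specNorm M := by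
  rw [← Matrix.conjTranspose_eq_transpose_of_trivial]
  exact M.l2_opNorm_conjTranspose

lemma norm_toLp_mulVec_le (M : Matrix m n ℝ) (v : n → ℝ) :
    ‖WithLp.toLp 2 (M *ᵥ v)‖ ≤ specNorm M * ‖WithLp.toLp 2 v‖ :=
  M.l2_opNorm_mulVec (WithLp.toLp 2 v)

end SpectralNorm

section TripleNorm

variable {r₁ X r₂ : Type*} [Fintype r₁] [Fintype X] [Fintype r₂] [DecidableEq r₂]

lemma tnorm_nonneg (G : r₁ → X → r₂ → ℝ) : 0 ≤ tnorm G :=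
  Real.iSup_nonneg fun _ => specNorm_nonneg _

lemma specNorm_le_tnorm (G : r₁ → X → r₂ → ℝ) (x : X) :
    specNorm (Matrix.of fun α β => G α x β) ≤ tnorm G :=
  le_ciSup (f := fun x => specNorm (Matrix.of fun α β => G α x β))
    (Set.finite_range _).bddAbove x

end TripleNorm

lemma norm_toLp_pi_prod {ι : Type*} [Fintype ι] [DecidableEq ι] {κ : ι → Type*}
    [∀ i, Fintype (κ i)] (v : ∀ i, κ i → ℝ) :
    ‖WithLp.toLp 2 (fun β : ∀ i, κ i => ∏ i, v i (β i))‖ = ∏ i, ‖WithLp.toLp 2 (v i)‖ := by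
  simp only [EuclideanSpace.norm_eq, Real.norm_eq_abs, sq_abs]
  rw [← Real.sqrt_prod _ fun i _ => Finset.sum_nonneg fun _ _ => sq_nonneg _,
    Finset.prod_univ_sum, Fintype.piFinset_univ]
  simp only [Finset.prod_pow]

section ContractionBound

open scoped Matrix

variable {d : ℕ} (T : ParentTree d) {n r : Fin d → ℕ}
  (H : ∀ k : Fin d, ((w : T.children k) → Fin (r w)) → Fin (n k) → Fin (r k) → ℝ)
  (x : ∀ i, Fin (n i)) (c : Fin d → ℝ)

lemma ParentTree.card_desc_lt {k w : Fin d} (hw : w ∈ T.children k) :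
    Fintype.card (T.desc w) < Fintype.card (T.desc k) :=
  Set.card_lt_card <| (Set.ssubset_iff_of_subset fun _ => T.desc_trans
    (T.mem_desc_of_mem_children hw)).2
    ⟨w, T.mem_desc_of_mem_children hw, T.not_mem_desc_self w⟩

theorem norm_subtreeContract_le (hc : ∀ k, 0 ≤ c k)
    (hH : ∀ k, specNorm (Matrix.of fun β a => H k β (x k) a) ≤ c k) (k : Fin d) :
    ‖WithLp.toLp 2 (subtreeContract T H x k)‖ ≤ c k * ∏ j : T.desc k, c j := by
  have ih (w : T.children k) := norm_subtreeContract_le hc hH w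
  have hrec : subtreeContract T H x k = (Matrix.of fun β a => H k β (x k) a)ᵀ *ᵥ
      fun β => ∏ w : T.children k, subtreeContract T H x w (β w) := by
    funext a
    simp only [subtreeContract_eq T H x k a, Matrix.mulVec, dotProduct, Matrix.transpose_apply,
      Matrix.of_apply]
  calc ‖WithLp.toLp 2 (subtreeContract T H x k)‖
      ≤ specNorm (Matrix.of fun β a => H k β (x k) a) *
          ∏ w : T.children k, ‖WithLp.toLp 2 (subtreeContract T H x w)‖ := by
        rw [hrec, ← specNorm_transpose, ← norm_toLp_pi_prod]
        exact norm_toLp_mulVec_le _ _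
    _ ≤ c k * ∏ w : T.children k, (c w * ∏ j : T.desc w, c j) :=
        mul_le_mul (hH k) (Finset.prod_le_prod (fun _ _ => norm_nonneg _) fun w _ => ih w)
          (Finset.prod_nonneg fun _ _ => norm_nonneg _) (hc k)
    _ = c k * ∏ j : T.desc k, c j := by rw [T.prod_desc k (fun j => c j)]
termination_by Fintype.card (T.desc k)
decreasing_by exact T.card_desc_lt w.2

theorem abs_ttnsContract_le (hroot : r T.root = 1) (hc : ∀ k, 0 ≤ c k)
    (hH : ∀ k, specNorm (Matrix.of fun β a => H k β (x k) a) ≤ c k) :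
    |ttnsContract T n r H x| ≤ ∏ k, c k := by
  rw [ttnsContract_eq_sum_subtreeContract_root, T.prod_univ_eq_mul_prod_desc_root]
  calc |∑ a, subtreeContract T H x T.root a|
      ≤ ∑ a, |subtreeContract T H x T.root a| := Finset.abs_sum_le_sum_abs _ _
    _ ≤ ∑ _a : Fin (r T.root), ‖WithLp.toLp 2 (subtreeContract T H x T.root)‖ :=
        Finset.sum_le_sum fun a _ => by
          simpa using PiLp.norm_apply_le (WithLp.toLp 2 (subtreeContract T H x T.root)) a
    _ = ‖WithLp.toLp 2 (subtreeContract T H x T.root)‖ := by simp [hroot]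
    _ ≤ c T.root * ∏ j : T.desc T.root, c j := norm_subtreeContract_le T H x c hc hH T.root

end ContractionBound

/-- The `i`-th term of the telescoping expansion of `∏ (f + g) - ∏ f`. -/
def hybrid {ι : Type*} [LinearOrder ι] {β : ι → Type*} [∀ i, Add (β i)] (f g : ∀ i, β i)
    (i : ι) : ∀ j, β j :=
  fun j => if j < i then f j + g j else if j = i then g j else f j

lemma Finset.prod_add_sub_prod_eq_sum_prod_hybrid {ι R : Type*} [CommRing R] [LinearOrder ι]
    (s : Finset ι) (f g : ι → R) :
    ∏ j ∈ s, (f j + g j) - ∏ j ∈ s, f j = ∑ i ∈ s, ∏ j ∈ s, hybrid f g i j := by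
  rw [Finset.prod_add_ordered, add_sub_cancel_left]
  refine Finset.sum_congr rfl fun i hi => ?_
  rw [← Finset.mul_prod_erase s _ hi,
    ← Finset.prod_filter_mul_prod_filter_not (s.erase i) (· < i)]
  have hlt : (s.erase i).filter (· < i) = s.filter (· < i) := by
    ext j; simp only [Finset.mem_filter, Finset.mem_erase]; grind
  have hgt : (s.erase i).filter (¬ · < i) = s.filter (i < ·) := by
    ext j; simp only [Finset.mem_filter, Finset.mem_erase]; grind
  rw [hlt, hgt, mul_assoc]
  simp only [hybrid, lt_irrefl, if_false, if_true]
  congr 2 <;> refine Finset.prod_congr rfl fun j hj => ?_ <;>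
    simp only [Finset.mem_filter] at hj <;> grind

section Perturbation

variable {d : ℕ} (T : ParentTree d) {n r : Fin d → ℕ}
  (G ΔG : ∀ k : Fin d, ((w : T.children k) → Fin (r w)) → Fin (n k) → Fin (r k) → ℝ)

lemma ttnsContract_add_sub (x : ∀ i, Fin (n i)) :
    ttnsContract T n r (fun k => G k + ΔG k) x - ttnsContract T n r G x =
      ∑ i, ttnsContract T n r (hybrid G ΔG i) x := by
  simp only [ttnsContract, ← Finset.sum_sub_distrib]
  rw [Finset.sum_comm]
  refine Finset.sum_congr rfl fun α _ => ?_
  convert Finset.prod_add_sub_prod_eq_sum_prod_hybrid Finset.univ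
    (fun k => G k (fun w => α w) (x k) (α k)) (fun k => ΔG k (fun w => α w) (x k) (α k))
    using 3 with _ _ i _ j _
  · rfl
  · simp only [hybrid]
    split_ifs <;> rfl

variable {δ : Fin d → ℝ}

lemma specNorm_hybrid_slice_le (hδ : ∀ k, 0 ≤ δ k) (hΔG : ∀ k, tnorm (ΔG k) ≤ δ k * tnorm (G k))
    (i k : Fin d) (y : Fin (n k)) :
    specNorm (Matrix.of fun β a => hybrid G ΔG i k β y a) ≤
      (if k = i then δ k else 1) * ((1 + δ k) * tnorm (G k)) := by
  have hG := specNorm_le_tnorm (G k) y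
  have hΔ := (specNorm_le_tnorm (ΔG k) y).trans (hΔG k)
  have hGnn := tnorm_nonneg (G k)
  have hδk := hδ k
  rcases lt_trichotomy k i with hki | rfl | hki
  · simp only [hybrid, hki, hki.ne, if_true, if_false]
    have := specNorm_add_le (Matrix.of fun β a => G k β y a) (Matrix.of fun β a => ΔG k β y a)
    exact this.trans (by linarith)
  · simp only [hybrid, lt_irrefl, if_true, if_false]
    nlinarith [mul_nonneg (mul_nonneg hδk hδk) hGnn]
  · simp only [hybrid, hki.not_gt, hki.ne', if_false]
    nlinarith

lemma abs_ttnsContract_hybrid_le (hδ : ∀ k, 0 ≤ δ k) (hΔG : ∀ k, tnorm (ΔG k) ≤ δ k * tnorm (G k))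
    (hroot : r T.root = 1) (i : Fin d) (x : ∀ k, Fin (n k)) :
    |ttnsContract T n r (hybrid G ΔG i) x| ≤ δ i * ∏ k, (1 + δ k) * tnorm (G k) := by
  have hc (k : Fin d) : 0 ≤ (if k = i then δ k else 1) * ((1 + δ k) * tnorm (G k)) := by
    have := hδ k
    have := tnorm_nonneg (G k)
    split_ifs <;> positivity
  calc |ttnsContract T n r (hybrid G ΔG i) x|
      ≤ ∏ k, (if k = i then δ k else 1) * ((1 + δ k) * tnorm (G k)) :=
        abs_ttnsContract_le T _ x _ hroot hc
          fun k => specNorm_hybrid_slice_le T G ΔG hδ hΔG i k (x k)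
    _ = δ i * ∏ k, (1 + δ k) * tnorm (G k) := by
        rw [Finset.prod_mul_distrib, Finset.prod_ite_eq', if_pos (Finset.mem_univ i)]

lemma abs_ttnsContract_add_sub_le (hδ : ∀ k, 0 ≤ δ k) (hΔG : ∀ k, tnorm (ΔG k) ≤ δ k * tnorm (G k))
    (hroot : r T.root = 1) (x : ∀ k, Fin (n k)) :
    |ttnsContract T n r (fun k => G k + ΔG k) x - ttnsContract T n r G x| ≤
      (∏ k, tnorm (G k)) * (∑ k, δ k) * Real.exp (∑ k, δ k) := by
  have hG : 0 ≤ ∏ k, tnorm (G k) := Finset.prod_nonneg fun k _ => tnorm_nonneg (G k)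
  calc |ttnsContract T n r (fun k => G k + ΔG k) x - ttnsContract T n r G x|
      ≤ ∑ i, |ttnsContract T n r (hybrid G ΔG i) x| := by
        rw [ttnsContract_add_sub]
        exact Finset.abs_sum_le_sum_abs _ _
    _ ≤ ∑ i, δ i * ∏ k, (1 + δ k) * tnorm (G k) :=
        Finset.sum_le_sum fun i _ => abs_ttnsContract_hybrid_le T G ΔG hδ hΔG hroot i x
    _ = (∑ k, δ k) * (∏ k, (1 + δ k)) * ∏ k, tnorm (G k) := by
        rw [← Finset.sum_mul, Finset.prod_mul_distrib, mul_assoc]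
    _ ≤ (∑ k, δ k) * Real.exp (∑ k, δ k) * ∏ k, tnorm (G k) := by
        gcongr
        · exact Finset.sum_nonneg fun k _ => hδ k
        · exact Real.prod_one_add_le_exp_sum _ hδ
    _ = (∏ k, tnorm (G k)) * (∑ k, δ k) * Real.exp (∑ k, δ k) := by ring

end Perturbation

lemma mul_exp_le_of_le_div_three {t ε : ℝ} (hε₀ : 0 < ε) (hε₁ : ε < 1) (ht : t ≤ ε / 3) :
    t * Real.exp t ≤ ε := by
  rcases le_or_gt t 0 with ht₀ | ht₀
  · nlinarith [Real.exp_pos t]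
  · have : Real.exp t < 3 :=
      (Real.exp_lt_exp.2 (by linarith : t < 1)).trans (by linarith [Real.exp_one_lt_d9])
    nlinarith

lemma Finset.sum_le_of_le_div_card {ι : Type*} (s : Finset ι) {f : ι → ℝ} {a : ℝ} (ha : 0 ≤ a)
    (h : ∀ i ∈ s, f i ≤ a / s.card) : ∑ i ∈ s, f i ≤ a := by
  rcases s.eq_empty_or_nonempty with rfl | hs
  · simpa using ha
  · calc ∑ i ∈ s, f i ≤ s.card • (a / s.card) := Finset.sum_le_card_nsmul s f _ h
      _ = a := by
        rw [nsmul_eq_mul]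
        exact mul_div_cancel₀ a (Nat.cast_ne_zero.2 hs.card_pos.ne')

theorem ttns_contraction_perturbation_general {d : ℕ} (T : ParentTree d) (n r : Fin d → ℕ)
    (hroot : r T.root = 1)
    (G ΔG : ∀ k : Fin d, ((w : T.children k) → Fin (r w.1)) → Fin (n k) → Fin (r k) → ℝ)
    (δ : Fin d → ℝ) (hδ : ∀ k, 0 ≤ δ k)
    (hΔG : ∀ k, tnorm (ΔG k) ≤ δ k * tnorm (G k)) :
    (∀ x : ∀ i, Fin (n i),
        |ttnsContract T n r (fun k => G k + ΔG k) x - ttnsContract T n r G x| ≤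
          (∏ k : Fin d, tnorm (G k)) * (∑ k : Fin d, δ k) * Real.exp (∑ k : Fin d, δ k)) ∧
    (∀ ε : ℝ, 0 < ε → ε < 1 → (∀ k, δ k ≤ ε / (3 * d)) →
      ∀ x : ∀ i, Fin (n i),
        |ttnsContract T n r (fun k => G k + ΔG k) x - ttnsContract T n r G x| ≤
          ε * ∏ k : Fin d, tnorm (G k)) := by
  have hbound := abs_ttnsContract_add_sub_le T G ΔG hδ hΔG hroot
  refine ⟨hbound, fun ε hε₀ hε₁ hδε x => (hbound x).trans ?_⟩
  have hsum : ∑ k, δ k ≤ ε / 3 :=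
    Finset.sum_le_of_le_div_card _ (by positivity) fun k _ => by
      simpa [div_div] using hδε k
  have hG : 0 ≤ ∏ k, tnorm (G k) := Finset.prod_nonneg fun k _ => tnorm_nonneg (G k)
  rw [mul_assoc, mul_comm ε]
  exact mul_le_mul_of_nonneg_left (mul_exp_le_of_le_div_three hε₀ hε₁ hsum) hG

/-- perturbation bound for TTNS contractions. If `⦀ΔG_k⦀ ≤ δ_k ⦀G_k⦀`
for all `k`, then `‖p' − p‖_∞ ≤ (∏_k ⦀G_k⦀)(Σ_k δ_k) exp(Σ_k δ_k)`; moreover if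
`ε ∈ (0,1)` and `max_k δ_k ≤ ε/(3d)` then `‖p' − p‖_∞ / ∏_k ⦀G_k⦀ ≤ ε`. -/
theorem ttns_contraction_perturbation {d : ℕ} (T : ParentTree d) (n r : Fin d → ℕ)
    (hn : ∀ k, 1 ≤ n k) (hr : ∀ w, 1 ≤ r w) (hroot : r T.root = 1)
    (G ΔG : ∀ k : Fin d, ((w : T.children k) → Fin (r w.1)) → Fin (n k) → Fin (r k) → ℝ)
    (δ : Fin d → ℝ) (hδ : ∀ k, 0 ≤ δ k)
    (hΔG : ∀ k, tnorm (ΔG k) ≤ δ k * tnorm (G k)) :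
    (∀ x : ∀ i, Fin (n i),
        |ttnsContract T n r (fun k => G k + ΔG k) x - ttnsContract T n r G x| ≤
          (∏ k : Fin d, tnorm (G k)) * (∑ k : Fin d, δ k) * Real.exp (∑ k : Fin d, δ k)) ∧
    (∀ ε : ℝ, 0 < ε → ε < 1 → (∀ k, δ k ≤ ε / (3 * d)) →
      ∀ x : ∀ i, Fin (n i),
        |ttnsContract T n r (fun k => G k + ΔG k) x - ttnsContract T n r G x| ≤
          ε * ∏ k : Fin d, tnorm (G k)) :=
  ttns_contraction_perturbation_general T n r hroot G ΔG δ hδ hΔG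
end
end

section
/- Let (C_i)_{i=1}^n and (E_i)_{i=1}^n be real matrices with C_i and E_i of the same size for each i, and suppose ‖C_i‖ ≤ 1 and ‖E_i‖ ≤ δ_i for all i, where δ_i ≥ 0. Then ‖⊗_{i=1}^n (C_i + E_i) − ⊗_{i=1}^n C_i‖ ≤ (Σ_{i=1}^n δ_i) · exp(Σ_{i=1}^n δ_i). -/
/-!
Write `F` and `G` for the Kronecker products of the factors `C i + E i` and `C i` with
`i ≠ 0`. Then `⊗ (C i + E i) - ⊗ C i = C 0 ⊗ (F - G) + E 0 ⊗ F`, and the spectral norm is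
submultiplicative on Kronecker products, because `A ⊗ B = (A ⊗ 1) (1 ⊗ B)` and both factors
are block diagonal up to a permutation. Induction on the number of factors therefore bounds the
perturbation by `∏ (1 + δ i) - 1`, and `∏ (1 + δ i) - 1 ≤ exp s - 1 ≤ s exp s` for `s = ∑ δ i`.
-/

open scoped Classical

noncomputable section

/-- The Kronecker (tensor) product of a family of matrices: rows are indexed by the
product of the row indices, columns by the product of the column indices, and the
entry is the product of the corresponding entries. -/
def kronFamily {N : ℕ} {m p : Fin N → ℕ} (C : ∀ i, Matrix (Fin (m i)) (Fin (p i)) ℝ) :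
    Matrix ((i : Fin N) → Fin (m i)) ((i : Fin N) → Fin (p i)) ℝ :=
  Matrix.of fun a b => ∏ i, C i (a i) (b i)

open scoped Matrix.Norms.L2Operator Kronecker

lemma specNorm_eq_l2_opNorm {m n : Type*} [Fintype m] [Fintype n] [DecidableEq n]
    (A : Matrix m n ℝ) : specNorm A = ‖A‖ := rfl

namespace Matrix

variable {𝕜 : Type*} [RCLike 𝕜] {l m n o : Type*} [Fintype n] [Fintype o] [DecidableEq o]

lemma blockDiagonal_mulVec (d : o → Matrix m n 𝕜) (x : n × o → 𝕜) (i : m) (k : o) :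
    (blockDiagonal d *ᵥ x) (i, k) = (d k *ᵥ fun j => x (j, k)) i := by
  simp [mulVec, dotProduct, blockDiagonal_apply, Fintype.sum_prod_type_right, ite_mul]

variable [Fintype l] [Fintype m] [DecidableEq l] [DecidableEq n]

lemma sum_norm_sq_mulVec_le (A : Matrix m n 𝕜) (x : n → 𝕜) :
    ∑ i, ‖(A *ᵥ x) i‖ ^ 2 ≤ ‖A‖ ^ 2 * ∑ j, ‖x j‖ ^ 2 := by
  have h := A.l2_opNorm_mulVec ((EuclideanSpace.equiv n 𝕜).symm x)
  have := pow_le_pow_left₀ (norm_nonneg _) h 2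
  rwa [mul_pow, EuclideanSpace.norm_sq_eq, EuclideanSpace.norm_sq_eq] at this

lemma l2_opNorm_le_of_sum_norm_sq_mulVec_le (A : Matrix m n 𝕜) {c : ℝ} (hc : 0 ≤ c)
    (h : ∀ x : n → 𝕜, ∑ i, ‖(A *ᵥ x) i‖ ^ 2 ≤ c ^ 2 * ∑ j, ‖x j‖ ^ 2) : ‖A‖ ≤ c := by
  refine ContinuousLinearMap.opNorm_le_bound _ hc fun x => ?_
  refine (pow_le_pow_iff_left₀ (norm_nonneg _) (by positivity) two_ne_zero).1 ?_
  rw [mul_pow, EuclideanSpace.norm_sq_eq, EuclideanSpace.norm_sq_eq]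
  exact h x

lemma l2_opNorm_submatrix_equiv_le {m' n' : Type*} [Fintype m'] [Fintype n'] [DecidableEq n']
    (A : Matrix m n 𝕜) (e : m' ≃ m) (f : n' ≃ n) : ‖A.submatrix e f‖ ≤ ‖A‖ := by
  refine l2_opNorm_le_of_sum_norm_sq_mulVec_le _ (norm_nonneg A) fun x => ?_
  rw [submatrix_mulVec_equiv]
  calc ∑ i, ‖((A *ᵥ (x ∘ f.symm)) ∘ e) i‖ ^ 2 = ∑ i, ‖(A *ᵥ (x ∘ f.symm)) i‖ ^ 2 :=
        e.sum_comp fun i => ‖(A *ᵥ (x ∘ f.symm)) i‖ ^ 2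
    _ ≤ ‖A‖ ^ 2 * ∑ j, ‖x (f.symm j)‖ ^ 2 := sum_norm_sq_mulVec_le A _
    _ = ‖A‖ ^ 2 * ∑ j, ‖x j‖ ^ 2 := by rw [f.symm.sum_comp fun j => ‖x j‖ ^ 2]

lemma l2_opNorm_blockDiagonal_le (d : o → Matrix m n 𝕜) {c : ℝ} (hc : 0 ≤ c)
    (hd : ∀ k, ‖d k‖ ≤ c) : ‖blockDiagonal d‖ ≤ c := by
  refine l2_opNorm_le_of_sum_norm_sq_mulVec_le _ hc fun x => ?_
  simp only [Fintype.sum_prod_type_right, blockDiagonal_mulVec]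
  rw [Finset.mul_sum]
  gcongr with k
  exact (sum_norm_sq_mulVec_le _ _).trans (by gcongr; exact hd k)

lemma l2_opNorm_kronecker_le (A : Matrix m n 𝕜) (B : Matrix o l 𝕜) :
    ‖A ⊗ₖ B‖ ≤ ‖A‖ * ‖B‖ := by
  have hA : ‖A ⊗ₖ (1 : Matrix o o 𝕜)‖ ≤ ‖A‖ := by
    rw [kronecker_one]
    exact l2_opNorm_blockDiagonal_le _ (norm_nonneg A) fun _ => le_rfl
  have hB : ‖(1 : Matrix n n 𝕜) ⊗ₖ B‖ ≤ ‖B‖ := by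
    rw [one_kronecker, reindex_apply]
    exact (l2_opNorm_submatrix_equiv_le _ _ _).trans
      (l2_opNorm_blockDiagonal_le _ (norm_nonneg B) fun _ => le_rfl)
  calc ‖A ⊗ₖ B‖ = ‖(A ⊗ₖ (1 : Matrix o o 𝕜)) * ((1 : Matrix n n 𝕜) ⊗ₖ B)‖ := by
        rw [← mul_kronecker_mul, Matrix.mul_one, Matrix.one_mul]
    _ ≤ ‖A‖ * ‖B‖ := (l2_opNorm_mul _ _).trans (mul_le_mul hA hB (norm_nonneg _) (norm_nonneg _))

end Matrix

lemma kronFamily_succ {N : ℕ} {m p : Fin (N + 1) → ℕ}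
    (A : ∀ i, Matrix (Fin (m i)) (Fin (p i)) ℝ) :
    kronFamily A = (A 0 ⊗ₖ kronFamily fun i => A i.succ).submatrix
      (Fin.consEquiv _).symm (Fin.consEquiv _).symm := by
  ext a b
  simp [kronFamily, Fin.prod_univ_succ, Fin.tail]

lemma l2_opNorm_kronFamily_le {N : ℕ} {m p : Fin N → ℕ}
    (A : ∀ i, Matrix (Fin (m i)) (Fin (p i)) ℝ) :
    ‖kronFamily A‖ ≤ ∏ i, ‖A i‖ := by
  induction N with
  | zero =>
    refine Matrix.l2_opNorm_le_of_sum_norm_sq_mulVec_le _ zero_le_one fun x => ?_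
    simp [kronFamily, Matrix.mulVec, dotProduct]
  | succ N ih =>
    rw [kronFamily_succ, Fin.prod_univ_succ]
    calc _ ≤ ‖A 0 ⊗ₖ kronFamily fun i => A i.succ‖ := Matrix.l2_opNorm_submatrix_equiv_le _ _ _
      _ ≤ ‖A 0‖ * ‖kronFamily fun i => A i.succ‖ := Matrix.l2_opNorm_kronecker_le _ _
      _ ≤ ‖A 0‖ * ∏ i : Fin N, ‖A i.succ‖ := by gcongr; exact ih _

lemma l2_opNorm_kronFamily_add_sub_le {N : ℕ} {m p : Fin N → ℕ}
    (C E : ∀ i, Matrix (Fin (m i)) (Fin (p i)) ℝ) (c δ : Fin N → ℝ)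
    (hC : ∀ i, ‖C i‖ ≤ c i) (hE : ∀ i, ‖E i‖ ≤ δ i) :
    ‖kronFamily (fun i => C i + E i) - kronFamily C‖ ≤ ∏ i, (c i + δ i) - ∏ i, c i := by
  induction N with
  | zero => simp [kronFamily]
  | succ N ih =>
    set F := kronFamily fun i : Fin N => C i.succ + E i.succ
    set G := kronFamily fun i : Fin N => C i.succ
    have hsplit : kronFamily (fun i => C i + E i) - kronFamily C =
        (C 0 ⊗ₖ (F - G) + E 0 ⊗ₖ F).submatrix (Fin.consEquiv _).symm (Fin.consEquiv _).symm := by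
      rw [kronFamily_succ (fun i => C i + E i), kronFamily_succ C]
      ext a b
      simp only [Matrix.submatrix_apply, Matrix.sub_apply, Matrix.add_apply,
        Matrix.kroneckerMap_apply]
      ring
    have hF : ‖F‖ ≤ ∏ i : Fin N, (c i.succ + δ i.succ) :=
      (l2_opNorm_kronFamily_le _).trans <| Finset.prod_le_prod (fun _ _ => norm_nonneg _)
        fun i _ => (norm_add_le _ _).trans (add_le_add (hC _) (hE _))
    have hFG : ‖F - G‖ ≤ ∏ i : Fin N, (c i.succ + δ i.succ) - ∏ i : Fin N, c i.succ :=
      ih _ _ _ _ (fun _ => hC _) (fun _ => hE _)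
    rw [hsplit, Fin.prod_univ_succ, Fin.prod_univ_succ]
    calc _ ≤ ‖C 0 ⊗ₖ (F - G) + E 0 ⊗ₖ F‖ := Matrix.l2_opNorm_submatrix_equiv_le _ _ _
      _ ≤ ‖C 0‖ * ‖F - G‖ + ‖E 0‖ * ‖F‖ := (norm_add_le _ _).trans <|
          add_le_add (Matrix.l2_opNorm_kronecker_le _ _) (Matrix.l2_opNorm_kronecker_le _ _)
      _ ≤ c 0 * (∏ i : Fin N, (c i.succ + δ i.succ) - ∏ i : Fin N, c i.succ) +
          δ 0 * ∏ i : Fin N, (c i.succ + δ i.succ) := by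
        have hc₀ : 0 ≤ c 0 := (norm_nonneg _).trans (hC 0)
        have hδ₀ : 0 ≤ δ 0 := (norm_nonneg _).trans (hE 0)
        have hgap := (norm_nonneg _).trans hFG
        gcongr
        · exact hC 0
        · exact hE 0
      _ = _ := by ring

lemma Real.prod_one_add_sub_one_le_sum_mul_exp_sum {ι : Type*} (s : Finset ι) (δ : ι → ℝ)
    (hδ : ∀ i ∈ s, 0 ≤ δ i) :
    ∏ i ∈ s, (1 + δ i) - 1 ≤ (∑ i ∈ s, δ i) * Real.exp (∑ i ∈ s, δ i) := by
  have hprod : ∏ i ∈ s, (1 + δ i) ≤ Real.exp (∑ i ∈ s, δ i) := by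
    rw [Real.exp_sum]
    exact Finset.prod_le_prod (fun i hi => by linarith [hδ i hi])
      fun i _ => by linarith [Real.add_one_le_exp (δ i)]
  have hexp : Real.exp (∑ i ∈ s, δ i) - 1 ≤ (∑ i ∈ s, δ i) * Real.exp (∑ i ∈ s, δ i) := by
    have := mul_le_mul_of_nonneg_right (Real.one_sub_le_exp_neg (∑ i ∈ s, δ i))
      (Real.exp_pos (∑ i ∈ s, δ i)).le
    rw [← Real.exp_add, neg_add_cancel, Real.exp_zero, sub_mul, one_mul] at this
    linarith
  linarith

theorem kronecker_product_perturbation_general {N : ℕ} {m p : Fin N → ℕ}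
    (C E : ∀ i, Matrix (Fin (m i)) (Fin (p i)) ℝ)
    (δ : Fin N → ℝ)
    (hC : ∀ i, specNorm (C i) ≤ 1) (hE : ∀ i, specNorm (E i) ≤ δ i) :
    specNorm (kronFamily (fun i => C i + E i) - kronFamily C) ≤
      (∑ i, δ i) * Real.exp (∑ i, δ i) := by
  simp only [specNorm_eq_l2_opNorm] at hC hE ⊢
  have hδ : ∀ i ∈ Finset.univ, 0 ≤ δ i := fun i _ => (norm_nonneg _).trans (hE i)
  calc ‖kronFamily (fun i => C i + E i) - kronFamily C‖ ≤ ∏ i, (1 + δ i) - 1 := by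
        simpa using l2_opNorm_kronFamily_add_sub_le C E 1 δ hC hE
    _ ≤ (∑ i, δ i) * Real.exp (∑ i, δ i) :=
        Real.prod_one_add_sub_one_le_sum_mul_exp_sum _ δ hδ

/-- if `‖C_i‖ ≤ 1` and `‖E_i‖ ≤ δ_i`, then
`‖⊗_i (C_i + E_i) − ⊗_i C_i‖ ≤ (Σ_i δ_i)·exp(Σ_i δ_i)`. -/
theorem kronecker_product_perturbation {N : ℕ} {m p : Fin N → ℕ}
    (C E : ∀ i, Matrix (Fin (m i)) (Fin (p i)) ℝ)
    (δ : Fin N → ℝ) (hδ : ∀ i, 0 ≤ δ i)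
    (hC : ∀ i, specNorm (C i) ≤ 1) (hE : ∀ i, specNorm (E i) ≤ δ i) :
    specNorm (kronFamily (fun i => C i + E i) - kronFamily C) ≤
      (∑ i, δ i) * Real.exp (∑ i, δ i) :=
  kronecker_product_perturbation_general C E δ hC hE
end
end
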